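/- arXiv:2106.14393 — 2 statements merged into one kernel-verified Lean document; each statement's English description precedes it below -/
import Mathlib

section
/- Let A be a real invertible d×d matrix. Then for all r_1, r_2 > 0, the d-dimensional Lebesgue measure satisfies 𝓛_d( (A^{−1} B_{ℝ^d}(0, r_1)) ∩ B_{ℝ^d}(0, r_2) ) ≤ 2^d · min{ r_1^k r_2^{d−k} / φ^k(A) : k = 0, 1, …, d }. -/
open MeasureTheory Filter Set Metric
open scoped Topology ENNReal NNReal Matrix

noncomputable section

namespace IFSPaper

/-- `ℝ^d` with the Euclidean norm. -/
abbrev Euc (d : ℕ) : Type := EuclideanSpace ℝ (Fin d)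

/-- The symbolic space `Σ = {1,…,ℓ}^ℕ`. -/
abbrev Seq (ℓ : ℕ) : Type := ℕ → Fin ℓ

abbrev Mat (d : ℕ) : Type := Matrix (Fin d) (Fin d) ℝ

/-- The left shift map `σ` on `Σ`. -/
def shiftMap {ℓ : ℕ} (x : Seq ℓ) : Seq ℓ := fun k => x (k + 1)

/-- The initial word `x|n` of a sequence `x`. -/
def prefixWord {ℓ : ℕ} (x : Seq ℓ) (n : ℕ) : List (Fin ℓ) := List.ofFn fun k : Fin n => x k

/-- For a word `I = i₁…iₙ`, the composition `f_I = f_{i₁} ∘ ⋯ ∘ f_{iₙ}`. -/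
def wordComp {ℓ : ℕ} {α : Type*} (f : Fin ℓ → α → α) : List (Fin ℓ) → α → α
  | [] => id
  | i :: w => f i ∘ wordComp f w

/-- The Jacobian matrix of `f_I` at `y`, computed from the Jacobians `Df` of the
individual maps via the chain rule. -/
def wordDeriv {ℓ d : ℕ} (f : Fin ℓ → Euc d → Euc d) (Df : Fin ℓ → Euc d → Mat d) :
    List (Fin ℓ) → Euc d → Mat d
  | [], _ => 1
  | i :: w, y => Df i (wordComp f w y) * wordDeriv f Df w y

/-- The coding map `Π(x) = lim_n f_{x₁} ∘ ⋯ ∘ f_{xₙ} (0)` of an IFS. -/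
def codingMap {ℓ d : ℕ} (f : Fin ℓ → Euc d → Euc d) (x : Seq ℓ) : Euc d :=
  limUnder atTop fun n => wordComp f (prefixWord x n) 0

/-- The singular values `α₁(A) ≥ α₂(A) ≥ … ≥ α_d(A)` of a `d × d` real matrix, in
decreasing order (indexed from `0`). -/
def singVals {d : ℕ} (A : Mat d) : Fin d → ℝ := fun k =>
  let v : Fin d → ℝ := fun m =>
    Real.sqrt ((show (Aᵀ * A).IsHermitian by
      simpa using Matrix.isHermitian_conjTranspose_mul_self A).eigenvalues m)
  v (Tuple.sort v k.rev)

/-- The singular value function `φ^s(A)`. -/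
def svf {d : ℕ} (s : ℝ) (A : Mat d) : ℝ :=
  if s < (d : ℝ) then
    ∏ k : Fin d,
      (if (k : ℕ) < ⌊s⌋₊ then singVals A k
       else if (k : ℕ) = ⌊s⌋₊ then singVals A k ^ (s - (⌊s⌋₊ : ℝ)) else 1)
  else |A.det| ^ (s / (d : ℝ))

/-- A matrix viewed as a continuous linear map on Euclidean space. -/
def matCLM {d : ℕ} (A : Mat d) : Euc d →L[ℝ] Euc d := Matrix.toEuclideanCLM (𝕜 := ℝ) A

/-- The operator norm of a matrix (= its largest singular value). -/
def opNorm {d : ℕ} (A : Mat d) : ℝ := ‖matCLM A‖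

end IFSPaper

/-!
Let `σᵢ² = μᵢ` be the eigenvalues of `AᵀA`, with orthonormal eigenvectors `bᵢ`. Since
`μᵢ ⟪bᵢ, x⟫ = ⟪A bᵢ, A x⟫` and `‖A bᵢ‖ = σᵢ`, Cauchy–Schwarz gives `σᵢ |⟪bᵢ, x⟫| ≤ ‖A x‖`, so the
set lies in the box `|⟪bᵢ, x⟫| ≤ min (r₁ / σᵢ) r₂`, of volume `2^d ∏ᵢ min (r₁ / σᵢ) r₂`. Taking
`r₁ / σᵢ` for the `k` largest singular values and `r₂` for the others bounds this product by
`r₁^k r₂^(d-k) / φ^k(A)`, for every `k`.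
-/

open scoped RealInnerProductSpace

section
variable {E F : Type*} [NormedAddCommGroup E] [InnerProductSpace ℝ E]

theorem ContinuousLinearMap.sqrt_mul_abs_inner_le_norm_apply [CompleteSpace E]
    [NormedAddCommGroup F] [InnerProductSpace ℝ F] [CompleteSpace F] (T : E →L[ℝ] F) {v : E}
    {μ : ℝ} (hv : adjoint T (T v) = μ • v) (hv₁ : ‖v‖ = 1) (x : E) :
    √μ * |⟪v, x⟫| ≤ ‖T x‖ := by
  have hinner : ∀ y, ⟪T v, T y⟫ = μ * ⟪v, y⟫ := fun y => by
    rw [← adjoint_inner_left, hv, real_inner_smul_left]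
  have hμ : ‖T v‖ ^ 2 = μ := by
    rw [← real_inner_self_eq_norm_sq, hinner, real_inner_self_eq_norm_sq, hv₁, one_pow, mul_one]
  rw [← hμ, Real.sqrt_sq (norm_nonneg _)]
  rcases (norm_nonneg (T v)).eq_or_lt with h0 | hpos
  · rw [← h0, zero_mul]
    exact norm_nonneg _
  refine le_of_mul_le_mul_left ?_ hpos
  calc ‖T v‖ * (‖T v‖ * |⟪v, x⟫|) = |⟪T v, T x⟫| := by
        rw [hinner, ← hμ, abs_mul, abs_of_nonneg (sq_nonneg ‖T v‖)]
        ring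
    _ ≤ ‖T v‖ * ‖T x‖ := abs_real_inner_le_norm _ _

theorem OrthonormalBasis.volume_setOf_abs_inner_le [FiniteDimensional ℝ E] [MeasurableSpace E]
    [BorelSpace E] {ι : Type*} [Fintype ι] (b : OrthonormalBasis ι ℝ E) {m : ι → ℝ}
    (hm : ∀ i, 0 ≤ m i) :
    volume {x | ∀ i, |⟪b i, x⟫| ≤ m i} = ENNReal.ofReal (∏ i, 2 * m i) := by
  have hbox : {x | ∀ i, |⟪b i, x⟫| ≤ m i} =
      b.repr ⁻¹' ((MeasurableEquiv.toLp 2 (ι → ℝ)).symm ⁻¹' univ.pi fun i => Icc (-m i) (m i)) := by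
    ext x
    simp only [mem_ofPred_eq, mem_preimage, mem_univ_pi, mem_Icc, abs_le,
      MeasurableEquiv.toLp_symm_apply, b.repr_apply_apply]
  have hIcc : MeasurableSet (univ.pi fun i => Icc (-m i) (m i)) :=
    MeasurableSet.univ_pi fun _ => measurableSet_Icc
  rw [hbox, b.measurePreserving_repr.measure_preimage
      ((MeasurableEquiv.toLp 2 (ι → ℝ)).symm.measurable hIcc).nullMeasurableSet,
    (EuclideanSpace.volume_preserving_symm_measurableEquiv_toLp ι).measure_preimage
      hIcc.nullMeasurableSet,
    volume_pi_pi, ENNReal.ofReal_prod_of_nonneg fun i _ => mul_nonneg zero_le_two (hm i)]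
  simp_rw [Real.volume_Icc, sub_neg_eq_add, ← two_mul]

end

open Finset in
theorem Finset.prod_min_le_prod_mul_pow {ι R : Type*} [CommSemiring R] [LinearOrder R]
    [IsStrictOrderedRing R] [DecidableEq ι] {s t : Finset ι} (hst : s ⊆ t) {f : ι → R} {c : R}
    (hf : ∀ i ∈ t, 0 ≤ f i) (hc : 0 ≤ c) :
    ∏ i ∈ t, min (f i) c ≤ (∏ i ∈ s, f i) * c ^ #(t \ s) := by
  rw [← prod_sdiff hst, mul_comm, ← prod_const]
  have hmin : ∀ i ∈ t, 0 ≤ min (f i) c := fun i hi => le_min (hf i hi) hc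
  exact mul_le_mul
    (prod_le_prod (fun i hi => hmin i (hst hi)) fun i _ => min_le_left _ _)
    (prod_le_prod (fun i hi => hmin i (sdiff_subset hi)) fun i _ => min_le_right _ _)
    (prod_nonneg fun i hi => hmin i (sdiff_subset hi))
    (prod_nonneg fun i hi => hf i (hst hi))

namespace IFSPaper

open Matrix Finset

variable {d : ℕ} (A : Mat d)

theorem adjoint_matCLM_matCLM_eigenvectorBasis (i : Fin d) :
    ContinuousLinearMap.adjoint (matCLM A)
        (matCLM A ((isHermitian_conjTranspose_mul_self A).eigenvectorBasis i)) =
      (isHermitian_conjTranspose_mul_self A).eigenvalues i •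
        (isHermitian_conjTranspose_mul_self A).eigenvectorBasis i := by
  rw [← ContinuousLinearMap.star_eq_adjoint, matCLM, ← map_star,
    ← mul_apply_eq_comp, ← map_mul]
  ext j
  simpa [star_eq_conjTranspose] using
    congrFun ((isHermitian_conjTranspose_mul_self A).mulVec_eigenvectorBasis i) j

theorem eigenvalues_conjTranspose_mul_self_pos (hA : IsUnit A.det) (i : Fin d) :
    0 < (isHermitian_conjTranspose_mul_self A).eigenvalues i :=
  (PosDef.conjTranspose_mul_self A
    (mulVec_injective_iff_isUnit.2 ((isUnit_iff_isUnit_det A).2 hA))).eigenvalues_pos i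

theorem preimage_closedBall_inter_closedBall_subset (hA : IsUnit A.det) (r₁ r₂ : ℝ) :
    matCLM A ⁻¹' closedBall (0 : Euc d) r₁ ∩ closedBall 0 r₂ ⊆
      {x | ∀ i, |⟪(isHermitian_conjTranspose_mul_self A).eigenvectorBasis i, x⟫| ≤
        min (r₁ / √((isHermitian_conjTranspose_mul_self A).eigenvalues i)) r₂} := by
  rintro x ⟨hx₁, hx₂⟩ i
  rw [Set.mem_preimage, mem_closedBall_zero_iff] at hx₁
  rw [mem_closedBall_zero_iff] at hx₂
  set b := (isHermitian_conjTranspose_mul_self A).eigenvectorBasis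
  refine le_min ?_ ?_
  · rw [le_div_iff₀' (Real.sqrt_pos.2 (eigenvalues_conjTranspose_mul_self_pos A hA i))]
    exact ((matCLM A).sqrt_mul_abs_inner_le_norm_apply
      (adjoint_matCLM_matCLM_eigenvectorBasis A i) (b.orthonormal.1 i) x).trans hx₁
  · calc |⟪b i, x⟫| ≤ ‖b i‖ * ‖x‖ := abs_real_inner_le_norm _ _
      _ ≤ r₂ := by rw [b.orthonormal.1 i, one_mul]; exact hx₂

theorem prod_comp_singVals (f : ℝ → ℝ) :
    ∏ j, f (singVals A j) = ∏ i, f √((isHermitian_conjTranspose_mul_self A).eigenvalues i) :=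
  Equiv.prod_comp (Fin.revPerm.trans (Tuple.sort _)) fun i =>
    f √((isHermitian_conjTranspose_mul_self A).eigenvalues i)

theorem prod_singVals : ∏ j, singVals A j = |A.det| := by
  have hdet := (isHermitian_conjTranspose_mul_self A).det_eq_prod_eigenvalues
  simp only [det_mul, det_conjTranspose, star_trivial, RCLike.ofReal_real_eq_id, id_eq] at hdet
  rw [← Real.sqrt_sq_eq_abs, sq, hdet,
    Real.sqrt_prod _ fun i _ => eigenvalues_conjTranspose_mul_self_nonneg A i]
  exact prod_comp_singVals A id

theorem svf_natCast {k : ℕ} (hk : k ≤ d) :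
    svf k A = ∏ j : Fin d with j.val < k, singVals A j := by
  rcases hk.lt_or_eq with hk | rfl
  · simp [svf, hk, prod_filter]
  · rcases Nat.eq_zero_or_pos k with rfl | hd
    · simp [svf]
    · simp [svf, prod_singVals, hd.ne']

theorem prod_min_div_sqrt_eigenvalues_le {k : ℕ} (hk : k ≤ d) {r₁ r₂ : ℝ} (hr₁ : 0 ≤ r₁)
    (hr₂ : 0 ≤ r₂) :
    ∏ i, min (r₁ / √((isHermitian_conjTranspose_mul_self A).eigenvalues i)) r₂ ≤
      r₁ ^ k * r₂ ^ (d - k) / svf k A := by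
  rw [← prod_comp_singVals A fun σ => min (r₁ / σ) r₂, svf_natCast A hk]
  calc ∏ j, min (r₁ / singVals A j) r₂
      ≤ (∏ j : Fin d with j.val < k, r₁ / singVals A j) *
          r₂ ^ #(univ \ ({j | j.val < k} : Finset (Fin d))) :=
        prod_min_le_prod_mul_pow (filter_subset _ _)
          (fun j _ => div_nonneg hr₁ (Real.sqrt_nonneg _)) hr₂
    _ = r₁ ^ k * r₂ ^ (d - k) / ∏ j : Fin d with j.val < k, singVals A j := by
        rw [prod_div_distrib, prod_const, card_sdiff_of_subset (filter_subset _ _), card_univ,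
          Fintype.card_fin, Fin.card_filter_val_lt, min_eq_right hk]
        ring

/-- Lemma 4.7: for a real invertible `d×d` matrix `A` and
`r₁, r₂ > 0`,
`𝓛_d((A⁻¹ B(0,r₁)) ∩ B(0,r₂)) ≤ 2^d min_{0≤k≤d} r₁^k r₂^{d-k} / φ^k(A)`. -/
theorem volume_preimage_ball_inter_ball
    {d : ℕ} (A : Mat d) (hA : IsUnit A.det)
    (r₁ r₂ : ℝ) (h₁ : 0 < r₁) (h₂ : 0 < r₂) :
    volume ((matCLM A ⁻¹' closedBall (0 : Euc d) r₁) ∩ closedBall (0 : Euc d) r₂) ≤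
      ENNReal.ofReal ((2 : ℝ) ^ d *
        ⨅ k : Fin (d + 1), r₁ ^ (k : ℕ) * r₂ ^ (d - (k : ℕ)) / svf ((k : ℕ) : ℝ) A) := by
  set H := isHermitian_conjTranspose_mul_self A
  calc volume ((matCLM A ⁻¹' closedBall (0 : Euc d) r₁) ∩ closedBall (0 : Euc d) r₂)
      ≤ volume {x | ∀ i, |⟪H.eigenvectorBasis i, x⟫| ≤ min (r₁ / √(H.eigenvalues i)) r₂} :=
        measure_mono (preimage_closedBall_inter_closedBall_subset A hA r₁ r₂)
    _ = ENNReal.ofReal (∏ i, 2 * min (r₁ / √(H.eigenvalues i)) r₂) :=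
        H.eigenvectorBasis.volume_setOf_abs_inner_le fun i => le_min (by positivity) h₂.le
    _ ≤ _ := by
        refine ENNReal.ofReal_le_ofReal ?_
        rw [prod_mul_distrib, prod_const, card_univ, Fintype.card_fin,
          Real.mul_iInf_of_nonneg (by positivity)]
        exact le_ciInf fun k => mul_le_mul_of_nonneg_left
          (prod_min_div_sqrt_eigenvalues_le A k.is_le h₁.le h₂.le) (by positivity)
end IFSPaper
end
end

section
/- Let {𝓕^𝔱}_{𝔱∈Δ} be a translational family of IFSs on a compact set S ⊂ ℝ^d generated by a C^1 IFS 𝓕 = {f_i}_{i=1}^ℓ, with ρ_i := sup_{z∈S} ‖D_z f_i‖ and ρ := max_{i≠j}(ρ_i + ρ_j) < 1. Let a = (a_n), b = (b_n) ∈ Σ with a_1 = 1 and b_1 = 2, and for k ∈ {1,…,ℓ} and 𝔱 ∈ Δ define E_k(𝔱) = Σ_{n≥1, a_{n+1}=k} ∏_{i=1}^{n} D_{Π^𝔱(σ^i a)} f_{a_i} − Σ_{n≥1, b_{n+1}=k} ∏_{i=1}^{n} D_{Π^𝔱(σ^i b)} f_{b_i}, where ∏_{i=1}^{n} D_{Π^𝔱(σ^i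 a)} f_{a_i} denotes the ordered product D_{Π^𝔱(σ a)} f_{a_1} · D_{Π^𝔱(σ^2 a)} f_{a_2} ⋯ D_{Π^𝔱(σ^n a)} f_{a_n}. Then there exists k* ∈ {1,2}, depending only on a and b, such that ‖E_{k*}(𝔱)‖ < ρ for all 𝔱 ∈ Δ. -/
/-! Put `r i = sup_{z ∈ S} ‖D_z f_i‖` and `P_x(n) = r(x₀) ⋯ r(x_{n-1})`. Since the coding map
takes values in `S`, `‖E_k(𝔱)‖ ≤ V_a(k) + V_b(k)` uniformly in `𝔱`, where
`V_x(k) = Σ_{n ≥ 1, x_n = k} P_x(n)`. As `(1 - r(x_n)) P_x(n) = P_x(n) - P_x(n+1)` telescopes,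
`Σ_k (1 - r k) V_x(k) ≤ r(x₀)`. Adding this for `x = a` and `x = b`: if `V_a(k) + V_b(k) ≥ ρ` for
both `k = a₀, b₀`, then `(2 - r(a₀) - r(b₀)) ρ ≤ r(a₀) + r(b₀) ≤ ρ`, which is impossible since
`r(a₀) + r(b₀) ≤ ρ < 1` and `ρ > 0`. -/

open MeasureTheory Filter Set Metric
open scoped Topology ENNReal NNReal Matrix

noncomputable section

namespace IFSPaper

/-- The conditions for `f` (with Jacobians `Df`) to be a `C¹` IFS on the compact set `Z`:
each map sends `Z` into itself and extends to a contracting `C¹` diffeomorphism of the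
open set `U ⊇ Z` into itself. -/
def IsC1IFS {ℓ d : ℕ} (Z U : Set (Euc d)) (f : Fin ℓ → Euc d → Euc d)
    (Df : Fin ℓ → Euc d → Mat d) : Prop :=
  IsCompact Z ∧ Z.Nonempty ∧ IsOpen U ∧ Z ⊆ U ∧
  ∀ i : Fin ℓ,
    MapsTo (f i) Z Z ∧ MapsTo (f i) U U ∧ InjOn (f i) U ∧
    (∀ x ∈ U, HasFDerivAt (f i) (matCLM (Df i x)) x) ∧
    ContinuousOn (fun x => matCLM (Df i x)) U ∧
    (∀ x ∈ U, IsUnit (Df i x).det) ∧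
    ∃ ρ : ℝ, ρ < 1 ∧ ∀ x ∈ U, opNorm (Df i x) ≤ ρ

/-- The parameter space `ℝ^{ℓd}` of translations, with the Euclidean norm. -/
abbrev Par (ℓ d : ℕ) : Type := EuclideanSpace ℝ (Fin ℓ × Fin d)

/-- The `i`-th translation component `tᵢ ∈ ℝ^d` of `𝔱 ∈ ℝ^{ℓd}`. -/
def trVec {ℓ d : ℕ} (𝔱 : Par ℓ d) (i : Fin ℓ) : Euc d :=
  (WithLp.equiv 2 (Fin d → ℝ)).symm fun j => 𝔱 (i, j)

/-- The translated IFS `𝓕^𝔱 = {f_i + tᵢ}`. -/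
def trIFS {ℓ d : ℕ} (f : Fin ℓ → Euc d → Euc d) (𝔱 : Par ℓ d) : Fin ℓ → Euc d → Euc d :=
  fun i x => f i x + trVec 𝔱 i

/-- The ordered product `∏_{i=1}^{n} D_{Π(σ^i a)} f_{a_i}
  = D_{Π(σ a)} f_{a₁} ⋅ D_{Π(σ² a)} f_{a₂} ⋯ D_{Π(σⁿ a)} f_{aₙ}`. -/
def ordProd {ℓ d : ℕ} (Df : Fin ℓ → Euc d → Mat d) (P : Seq ℓ → Euc d)
    (a : Seq ℓ) : ℕ → Mat d
  | 0 => 1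
  | n + 1 => ordProd Df P a n * Df (a n) (P fun k => a (k + (n + 1)))

/-- The matrix `E_k(𝔱)` of Lemma 4.8:
`E_k(𝔱) = Σ_{n≥1, a_{n+1}=k} ∏_{i=1}^n D_{Π^𝔱(σ^i a)} f_{a_i}
        − Σ_{n≥1, b_{n+1}=k} ∏_{i=1}^n D_{Π^𝔱(σ^i b)} f_{b_i}`. -/
def Efun {ℓ d : ℕ} (f : Fin ℓ → Euc d → Euc d) (Df : Fin ℓ → Euc d → Mat d)
    (a b : Seq ℓ) (k : Fin ℓ) (𝔱 : Par ℓ d) : Mat d :=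
  (∑' n : ℕ, if 1 ≤ n ∧ a n = k then ordProd Df (codingMap (trIFS f 𝔱)) a n else 0) -
    ∑' n : ℕ, if 1 ≤ n ∧ b n = k then ordProd Df (codingMap (trIFS f 𝔱)) b n else 0

open Finset

section OperatorNorm

open scoped Matrix.Norms.L2Operator

variable {d : ℕ}

lemma opNorm_eq_norm (A : Mat d) : opNorm A = ‖A‖ := rfl

lemma opNorm_nonneg (A : Mat d) : 0 ≤ opNorm A := norm_nonneg (matCLM A)

lemma opNorm_mul_le (A B : Mat d) : opNorm (A * B) ≤ opNorm A * opNorm B := norm_mul_le A B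

lemma opNorm_sub_le (A B : Mat d) : opNorm (A - B) ≤ opNorm A + opNorm B := norm_sub_le A B

lemma opNorm_one_le : opNorm (1 : Mat d) ≤ 1 := by
  rw [opNorm, matCLM, map_one]
  exact ContinuousLinearMap.norm_id_le

lemma opNorm_zero : opNorm (0 : Mat d) = 0 := norm_zero (E := Mat d)

lemma opNorm_tsum_le {g : ℕ → Mat d} {u : ℕ → ℝ} (hu : Summable u)
    (hg : ∀ n, opNorm (g n) ≤ u n) : opNorm (∑' n, g n) ≤ ∑' n, u n :=
  tsum_of_norm_bounded (E := Mat d) hu.hasSum hg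

lemma opNorm_pos_of_isUnit_det (hd : 0 < d) {A : Mat d} (hA : IsUnit A.det) : 0 < opNorm A := by
  have : Nonempty (Fin d) := Fin.pos_iff_nonempty.mp hd
  rw [opNorm_eq_norm, norm_pos_iff]
  rintro rfl
  simp at hA

end OperatorNorm

section PrefixWeight

variable {α : Type*} (r : α → ℝ)

def prefixWeight (x : ℕ → α) (n : ℕ) : ℝ := ∏ i ∈ range n, r (x i)

variable {r}

lemma prefixWeight_nonneg (hr : ∀ a, 0 ≤ r a) (x : ℕ → α) (n : ℕ) : 0 ≤ prefixWeight r x n :=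
  prod_nonneg fun _ _ => hr _

lemma sum_one_sub_mul_prefixWeight (x : ℕ → α) (N : ℕ) :
    ∑ n ∈ range N, (1 - r (x n)) * prefixWeight r x n = 1 - prefixWeight r x N := by
  induction N with
  | zero => simp [prefixWeight]
  | succ N ih => rw [sum_range_succ, ih, prefixWeight, prefixWeight, prod_range_succ]; ring

lemma sum_range_ite_one_sub_mul_prefixWeight_le (hr : ∀ a, 0 ≤ r a) (x : ℕ → α) (N : ℕ) :
    ∑ n ∈ range N, (if 1 ≤ n then (1 - r (x n)) * prefixWeight r x n else 0) ≤ r (x 0) := by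
  cases N with
  | zero => simpa using hr (x 0)
  | succ N =>
    have h := sum_one_sub_mul_prefixWeight (r := r) x (N + 1)
    rw [sum_range_succ', prefixWeight, prod_range_zero, mul_one] at h
    rw [sum_range_succ', if_neg (by omega), add_zero]
    simp_rw [if_pos (Nat.le_add_left 1 _)]
    linarith [prefixWeight_nonneg hr x (N + 1)]

lemma summable_ite_one_sub_mul_prefixWeight (hr : ∀ a, 0 ≤ r a) (hr1 : ∀ a, r a ≤ 1)
    (x : ℕ → α) :
    Summable fun n => if 1 ≤ n then (1 - r (x n)) * prefixWeight r x n else 0 := by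
  refine summable_of_sum_range_le (fun n => ?_) (sum_range_ite_one_sub_mul_prefixWeight_le hr x)
  split_ifs
  exacts [mul_nonneg (sub_nonneg.mpr (hr1 _)) (prefixWeight_nonneg hr x n), le_rfl]

variable [DecidableEq α]

variable (r) in
def visitWeight (x : ℕ → α) (k : α) : ℝ :=
  ∑' n, if 1 ≤ n ∧ x n = k then prefixWeight r x n else 0

lemma summable_visit (hr : ∀ a, 0 ≤ r a) (hr1 : ∀ a, r a < 1) (x : ℕ → α) (k : α) :
    Summable fun n => if 1 ≤ n ∧ x n = k then prefixWeight r x n else 0 := by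
  have htel := summable_ite_one_sub_mul_prefixWeight hr (fun a => (hr1 a).le) x
  refine (htel.div_const (1 - r k)).of_nonneg_of_le (fun n => ?_) (fun n => ?_)
  · split_ifs
    exacts [prefixWeight_nonneg hr x n, le_rfl]
  · -- on a visit to `k` the term is the telescoping term divided by `1 - r k`
    split_ifs with hk hn
    · rw [hk.2, mul_div_cancel_left₀ _ (sub_ne_zero.mpr (hr1 k).ne')]
    · exact absurd hk.1 hn
    · exact div_nonneg (mul_nonneg (sub_nonneg.mpr (hr1 _).le) (prefixWeight_nonneg hr x n))
        (sub_nonneg.mpr (hr1 k).le)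
    · simp

lemma sum_one_sub_mul_visitWeight_le [Fintype α] (hr : ∀ a, 0 ≤ r a) (hr1 : ∀ a, r a < 1)
    (x : ℕ → α) : ∑ k, (1 - r k) * visitWeight r x k ≤ r (x 0) := by
  have hterm : ∀ n, ∑ k, (1 - r k) * (if 1 ≤ n ∧ x n = k then prefixWeight r x n else 0) =
      if 1 ≤ n then (1 - r (x n)) * prefixWeight r x n else 0 := by
    intro n
    split_ifs with hn <;> simp [hn]
  calc ∑ k, (1 - r k) * visitWeight r x k
      = ∑' n, ∑ k, (1 - r k) * (if 1 ≤ n ∧ x n = k then prefixWeight r x n else 0) := by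
        simp_rw [visitWeight, ← tsum_mul_left]
        exact (Summable.tsum_finsetSum fun k _ => (summable_visit hr hr1 x k).mul_left _).symm
    _ = ∑' n, if 1 ≤ n then (1 - r (x n)) * prefixWeight r x n else 0 := tsum_congr hterm
    _ ≤ r (x 0) :=
        (summable_ite_one_sub_mul_prefixWeight hr (fun a => (hr1 a).le) x).tsum_le_of_sum_range_le
          (sum_range_ite_one_sub_mul_prefixWeight_le hr x)

lemma visitWeight_nonneg (hr : ∀ a, 0 ≤ r a) (x : ℕ → α) (k : α) : 0 ≤ visitWeight r x k :=
  tsum_nonneg fun n => by split_ifs; exacts [prefixWeight_nonneg hr x n, le_rfl]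

lemma one_sub_mul_visitWeight_add_le [Fintype α] (hr : ∀ a, 0 ≤ r a) (hr1 : ∀ a, r a < 1)
    (x y : ℕ → α) {i j : α} (hij : i ≠ j) :
    (1 - r i) * (visitWeight r x i + visitWeight r y i) +
      (1 - r j) * (visitWeight r x j + visitWeight r y j) ≤ r (x 0) + r (y 0) :=
  calc _ ≤ ∑ k, (1 - r k) * (visitWeight r x k + visitWeight r y k) :=
        add_le_sum (fun k _ => mul_nonneg (sub_nonneg.mpr (hr1 k).le)
          (add_nonneg (visitWeight_nonneg hr x k) (visitWeight_nonneg hr y k)))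
          (mem_univ i) (mem_univ j) hij
    _ = ∑ k, (1 - r k) * visitWeight r x k + ∑ k, (1 - r k) * visitWeight r y k := by
        simp only [mul_add, sum_add_distrib]
    _ ≤ r (x 0) + r (y 0) := add_le_add (sum_one_sub_mul_visitWeight_le hr hr1 x)
        (sum_one_sub_mul_visitWeight_le hr hr1 y)

end PrefixWeight

lemma lt_or_lt_of_one_sub_mul_add_le {α β A B ρ : ℝ} (hα : 0 < α) (hβ : 0 < β)
    (hαβ : α + β ≤ ρ) (hρ : ρ < 1) (h : (1 - α) * A + (1 - β) * B ≤ α + β) :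
    A < ρ ∨ B < ρ := by
  by_contra! hAB
  nlinarith [mul_pos (by linarith : 0 < ρ) (by linarith : 0 < 1 - α - β)]

section OrderedProduct

variable {ℓ d : ℕ} {Df : Fin ℓ → Euc d → Mat d} {r : Fin ℓ → ℝ}

lemma opNorm_ordProd_le {P : Seq ℓ → Euc d} (hDf : ∀ i y, opNorm (Df i (P y)) ≤ r i)
    (x : Seq ℓ) (n : ℕ) : opNorm (ordProd Df P x n) ≤ prefixWeight r x n := by
  induction n with
  | zero => exact opNorm_one_le
  | succ n ih =>
    have hr : ∀ i, 0 ≤ r i := fun i => (opNorm_nonneg _).trans (hDf i fun _ => i)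
    calc opNorm (ordProd Df P x (n + 1))
        ≤ opNorm (ordProd Df P x n) * opNorm (Df (x n) (P fun k => x (k + (n + 1)))) :=
          opNorm_mul_le _ _
      _ ≤ prefixWeight r x n * r (x n) :=
          mul_le_mul ih (hDf _ _) (opNorm_nonneg _) (prefixWeight_nonneg hr x n)
      _ = prefixWeight r x (n + 1) := (prod_range_succ _ n).symm

lemma opNorm_tsum_ordProd_le {P : Seq ℓ → Euc d} (hDf : ∀ i y, opNorm (Df i (P y)) ≤ r i)
    (hr1 : ∀ i, r i < 1) (x : Seq ℓ) (k : Fin ℓ) :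
    opNorm (∑' n, if 1 ≤ n ∧ x n = k then ordProd Df P x n else 0) ≤ visitWeight r x k := by
  have hr : ∀ i, 0 ≤ r i := fun i => (opNorm_nonneg _).trans (hDf i fun _ => i)
  refine opNorm_tsum_le (summable_visit hr hr1 x k) fun n => ?_
  split_ifs
  exacts [opNorm_ordProd_le hDf x n, opNorm_zero.le]

lemma opNorm_Efun_le {f : Fin ℓ → Euc d → Euc d} {𝔱 : Par ℓ d}
    (hDf : ∀ i y, opNorm (Df i (codingMap (trIFS f 𝔱) y)) ≤ r i) (hr1 : ∀ i, r i < 1)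
    (a b : Seq ℓ) (k : Fin ℓ) :
    opNorm (Efun f Df a b k 𝔱) ≤ visitWeight r a k + visitWeight r b k :=
  (opNorm_sub_le _ _).trans
    (add_le_add (opNorm_tsum_ordProd_le hDf hr1 a k) (opNorm_tsum_ordProd_le hDf hr1 b k))

end OrderedProduct

/-- The constant `ρ_i` of the paper. -/
def jacSup {ℓ d : ℕ} (S : Set (Euc d)) (Df : Fin ℓ → Euc d → Mat d) (i : Fin ℓ) : ℝ :=
  ⨆ z : S, opNorm (Df i z)

lemma jacSup_add_le_iSup {ℓ d : ℕ} (S : Set (Euc d)) (Df : Fin ℓ → Euc d → Mat d)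
    {i j : Fin ℓ} (hij : i ≠ j) :
    jacSup S Df i + jacSup S Df j ≤
      ⨆ p : {p : Fin ℓ × Fin ℓ // p.1 ≠ p.2}, jacSup S Df p.1.1 + jacSup S Df p.1.2 :=
  le_ciSup (f := fun p : {p : Fin ℓ × Fin ℓ // p.1 ≠ p.2} =>
      jacSup S Df p.1.1 + jacSup S Df p.1.2) (Set.finite_range _).bddAbove ⟨(i, j), hij⟩

namespace IsC1IFS

variable {ℓ d : ℕ} {S U : Set (Euc d)} {f : Fin ℓ → Euc d → Euc d} {Df : Fin ℓ → Euc d → Mat d}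

lemma exists_opNorm_le_lt_one (hIFS : IsC1IFS S U f Df) (i : Fin ℓ) :
    ∃ c < 1, ∀ z ∈ S, opNorm (Df i z) ≤ c := by
  obtain ⟨-, -, -, hSU, hmaps⟩ := hIFS
  obtain ⟨-, -, -, -, -, -, c, hc1, hc⟩ := hmaps i
  exact ⟨c, hc1, fun z hz => hc z (hSU hz)⟩

lemma opNorm_le_jacSup (hIFS : IsC1IFS S U f Df) (i : Fin ℓ) {z : Euc d} (hz : z ∈ S) :
    opNorm (Df i z) ≤ jacSup S Df i := by
  obtain ⟨c, -, hc⟩ := hIFS.exists_opNorm_le_lt_one i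
  exact le_ciSup (f := fun w : S => opNorm (Df i w))
    ⟨c, Set.forall_mem_range.2 fun w => hc w w.2⟩ ⟨z, hz⟩

lemma jacSup_lt_one (hIFS : IsC1IFS S U f Df) (i : Fin ℓ) : jacSup S Df i < 1 := by
  obtain ⟨c, hc1, hc⟩ := hIFS.exists_opNorm_le_lt_one i
  have : Nonempty S := hIFS.2.1.to_subtype
  exact (ciSup_le fun w : S => hc w w.2).trans_lt hc1

lemma jacSup_pos (hIFS : IsC1IFS S U f Df) (hd : 0 < d) (i : Fin ℓ) : 0 < jacSup S Df i := by
  obtain ⟨z, hz⟩ := hIFS.2.1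
  obtain ⟨-, -, -, -, -, hdet, -⟩ := hIFS.2.2.2.2 i
  exact (opNorm_pos_of_isUnit_det hd (hdet z (hIFS.2.2.2.1 hz))).trans_le
    (hIFS.opNorm_le_jacSup i hz)

end IsC1IFS

theorem exists_good_index_Efun_general
    {d ℓ : ℕ} (hd : 0 < d)
    (S U : Set (Euc d))
    (f : Fin ℓ → Euc d → Euc d) (Df : Fin ℓ → Euc d → Mat d)
    (hIFS : IsC1IFS S U f Df)
    -- `ρ = max_{i ≠ j} (ρ_i + ρ_j) < 1` where `ρ_i = sup_{z ∈ S} ‖D_z f_i‖`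
    (ρ : ℝ)
    (hρdef : ρ = ⨆ p : {p : Fin ℓ × Fin ℓ // p.1 ≠ p.2},
      (⨆ z : S, opNorm (Df (p : Fin ℓ × Fin ℓ).1 z)) +
        ⨆ z : S, opNorm (Df (p : Fin ℓ × Fin ℓ).2 z))
    (hρ : ρ < 1)
    (r₀ : ℝ)
    (hPi : ∀ 𝔱 : Par ℓ d, ‖𝔱‖ < r₀ → ∀ x : Seq ℓ,
      codingMap (trIFS f 𝔱) x ∈ S ∧
      Tendsto (fun n => wordComp (trIFS f 𝔱) (prefixWord x n) (0 : Euc d)) atTop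
        (𝓝 (codingMap (trIFS f 𝔱) x)))
    (a b : Seq ℓ) (ha : (a 0 : ℕ) = 0) (hb : (b 0 : ℕ) = 1) :
    ∃ kstar : Fin ℓ, ((kstar : ℕ) = 0 ∨ (kstar : ℕ) = 1) ∧
      ∀ 𝔱 : Par ℓ d, ‖𝔱‖ < r₀ → opNorm (Efun f Df a b kstar 𝔱) < ρ := by
  have hr := fun i => (hIFS.jacSup_pos hd i).le
  have hr1 := hIFS.jacSup_lt_one
  have hab : a 0 ≠ b 0 := fun h => by simpa [ha, hb] using congrArg Fin.val h
  have hE : ∀ k, ∀ 𝔱 : Par ℓ d, ‖𝔱‖ < r₀ → opNorm (Efun f Df a b k 𝔱) ≤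
      visitWeight (jacSup S Df) a k + visitWeight (jacSup S Df) b k := fun k 𝔱 h𝔱 =>
    opNorm_Efun_le (fun i y => hIFS.opNorm_le_jacSup i (hPi 𝔱 h𝔱 y).1) hr1 a b k
  rcases lt_or_lt_of_one_sub_mul_add_le (hIFS.jacSup_pos hd (a 0)) (hIFS.jacSup_pos hd (b 0))
    (hρdef ▸ jacSup_add_le_iSup S Df hab) hρ
    (one_sub_mul_visitWeight_add_le hr hr1 a b hab) with h | h
  · exact ⟨a 0, Or.inl ha, fun 𝔱 h𝔱 => (hE _ 𝔱 h𝔱).trans_lt h⟩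
  · exact ⟨b 0, Or.inr hb, fun 𝔱 h𝔱 => (hE _ 𝔱 h𝔱).trans_lt h⟩

/-- Lemma 4.8: in a translational family generated by a `C¹` IFS with
`ρ = max_{i≠j}(ρ_i + ρ_j) < 1` (where `ρ_i = sup_{z∈S} ‖D_z f_i‖`), for `a, b ∈ Σ`
with `a₁ = 1` and `b₁ = 2` there exists `k* ∈ {1, 2}` (depending only on `a, b`) with
`‖E_{k*}(𝔱)‖ < ρ` for all `𝔱 ∈ Δ`. -/
theorem exists_good_index_Efun
    {d ℓ : ℕ} (hd : 0 < d) (hℓ : 2 ≤ ℓ)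
    (S U : Set (Euc d))
    (f : Fin ℓ → Euc d → Euc d) (Df : Fin ℓ → Euc d → Mat d)
    (hIFS : IsC1IFS S U f Df)
    (hint : ∀ i, MapsTo (f i) S (interior S))
    -- `ρ = max_{i ≠ j} (ρ_i + ρ_j) < 1` where `ρ_i = sup_{z ∈ S} ‖D_z f_i‖`
    (ρ : ℝ)
    (hρdef : ρ = ⨆ p : {p : Fin ℓ × Fin ℓ // p.1 ≠ p.2},
      (⨆ z : S, opNorm (Df (p : Fin ℓ × Fin ℓ).1 z)) +
        ⨆ z : S, opNorm (Df (p : Fin ℓ × Fin ℓ).2 z))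
    (hρ : ρ < 1)
    (r₀ : ℝ) (hr₀ : 0 < r₀)
    (hr₀S : ∀ 𝔱 : Par ℓ d, ‖𝔱‖ < r₀ → ∀ i, MapsTo (trIFS f 𝔱 i) S (interior S))
    (hPi : ∀ 𝔱 : Par ℓ d, ‖𝔱‖ < r₀ → ∀ x : Seq ℓ,
      codingMap (trIFS f 𝔱) x ∈ S ∧
      Tendsto (fun n => wordComp (trIFS f 𝔱) (prefixWord x n) (0 : Euc d)) atTop
        (𝓝 (codingMap (trIFS f 𝔱) x)))
    (a b : Seq ℓ) (ha : (a 0 : ℕ) = 0) (hb : (b 0 : ℕ) = 1) :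
    ∃ kstar : Fin ℓ, ((kstar : ℕ) = 0 ∨ (kstar : ℕ) = 1) ∧
      ∀ 𝔱 : Par ℓ d, ‖𝔱‖ < r₀ → opNorm (Efun f Df a b kstar 𝔱) < ρ :=
  exists_good_index_Efun_general hd S U f Df hIFS ρ hρdef hρ r₀ hPi a b ha hb
end IFSPaper
end
end
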